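/- Let n ≥ 1 and let X ⊆ [0,1]^{2n+1} be a Kolmogorov-type embedding of a compact metric space X with respect to a Kolmogorov family of covers (F^m)_{m∈ℕ}. Then the embedding is basic, i.e. the induced transformation L : C(Z,ℝ) → C(X,ℝ) is surjective: every continuous f : X → ℝ can be written as f(x) = g(y_1) + ⋯ + g(y_{2n+1}) for some continuous g : Z → ℝ, where (y_1,…,y_{2n+1}) are the coordinates of x. -/

import Mathlib

open Topology

/-- The topology of pointwise convergence on `C(T, ℝ)`: the topology induced from the
product topology on `ℝ^T` via the canonical injection. -/
def cpTop (T : Type*) [TopologicalSpace T] : TopologicalSpace C(T, ℝ) :=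
  TopologicalSpace.induced (fun f => (f : T → ℝ)) Pi.topologicalSpace

/-- A subset `A` of a topological space is zero-dimensional if the subspace `A` has a
topological base consisting of sets clopen in `A`. -/
def ZeroDimSubset {X : Type*} [TopologicalSpace X] (A : Set X) : Prop :=
  ∀ (a : A) (U : Set A), IsOpen U → a ∈ U → ∃ V : Set A, IsClopen V ∧ a ∈ V ∧ V ⊆ U

/-- The transformation induced by an embedding `X ⊆ Y₁ × ⋯ × Y_k`:
`L g x = g y₁ + ⋯ + g y_k`, where `(y₁, …, y_k)` are the coordinates of `x`, each `yᵢ`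
regarded as a point of the disjoint union `Z = Σ i, Y i`. -/
noncomputable def inducedL {ι : Type*} [Fintype ι] {Y : ι → Type*}
    [∀ i, TopologicalSpace (Y i)] (X : Set (Π i, Y i))
    (g : C((Σ i, Y i), ℝ)) : C(X, ℝ) where
  toFun x := ∑ i, g ⟨i, (x : Π i, Y i) i⟩
  continuous_toFun := by
    apply continuous_finset_sum
    intro i _
    exact g.continuous.comp (continuous_sigmaMk.comp
      ((continuous_apply i).comp continuous_subtype_val))

/-- The embedding `X ⊆ [0,1]^N` separates the cover `Fm = Fm 1 ∪ ⋯ ∪ Fm N` if, for each `i`,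
the images under the `i`-th coordinate projection of distinct members of `Fm i` are
pairwise disjoint. -/
def KolSeparates {N : ℕ} (X : Set (Fin N → unitInterval))
    (Fm : Fin N → Finset (Set X)) : Prop :=
  ∀ i : Fin N, ∀ s ∈ Fm i, ∀ t ∈ Fm i, s ≠ t →
    Disjoint ((fun x : X => (x : Fin N → unitInterval) i) '' s)
      ((fun x : X => (x : Fin N → unitInterval) i) '' t)

/-- A Kolmogorov family of covers of `X ⊆ [0,1]^N` (for dimension parameter `n`):
a sequence of finite covers `F m = F m 1 ∪ ⋯ ∪ F m N` of `X` by closed sets such that each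
point belongs to members of at least `n + 1` of the subfamilies `F m i`, each subfamily
consists of pairwise disjoint sets, and the mesh of `F m` tends to `0` as `m → ∞`. -/
def IsKolmogorovFamily {N : ℕ} (X : Set (Fin N → unitInterval)) (n : ℕ)
    (F : ℕ → Fin N → Finset (Set X)) : Prop :=
  (∀ m i, ∀ s ∈ F m i, IsClosed s) ∧
  (∀ (m : ℕ) (x : X), n + 1 ≤ {i : Fin N | ∃ s ∈ F m i, x ∈ s}.ncard) ∧
  (∀ m i, ∀ s ∈ F m i, ∀ t ∈ F m i, s ≠ t → Disjoint s t) ∧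
  (∀ ε : ℝ, 0 < ε → ∃ M : ℕ, ∀ m ≥ M, ∀ i, ∀ s ∈ F m i, Metric.diam s < ε)

/-- The embedding `X ⊆ [0,1]^N` is of Kolmogorov type with respect to the family `F` if for
every `ε > 0` there is `m` such that `F m` has mesh `< ε` and the embedding separates `F m`. -/
def IsKolmogorovTypeEmbedding {N : ℕ} (X : Set (Fin N → unitInterval))
    (F : ℕ → Fin N → Finset (Set X)) : Prop :=
  ∀ ε : ℝ, 0 < ε → ∃ m : ℕ,
    (∀ i, ∀ s ∈ F m i, Metric.diam s < ε) ∧ KolSeparates X (F m)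


/-!
Given `f`, take a cover `F m` separated by the embedding on whose members `f` oscillates by at
most `η`. On the `i`-th copy of `[0,1]` let `g` be the constant `f(s) / (n+1)` on the pairwise
disjoint projections of the members `s` of `F m i`, with `‖g‖ ≤ ‖f‖ / (n+1)`. A point `x` lies
over members in at least `n+1` of the `2n+1` coordinates, each contributing about
`f x / (n+1)`, and every coordinate contributes at most `‖f‖ / (n+1)`; so
`‖f - L g‖ ≤ (n ‖f‖ + (2n+1) η) / (n+1) ≤ θ ‖f‖` with `θ = (n + 1/2) / (n+1) < 1`.
Repeating this on the remainder and summing the geometric series of corrections, which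
converges since `C(Z, ℝ)` is complete and `L` is continuous, gives an exact preimage.
-/

open Metric Set Function Filter Topology

lemma exists_continuous_eq_const_of_pairwiseDisjoint {T ι : Type*} [TopologicalSpace T]
    [NormalSpace T] {S : Finset ι} {K : ι → Set T} (hK : ∀ s ∈ S, IsClosed (K s))
    (hd : (S : Set ι).PairwiseDisjoint K) (c : ι → ℝ) {B : ℝ} (hB : 0 ≤ B)
    (hc : ∀ s ∈ S, |c s| ≤ B) :
    ∃ h : C(T, ℝ), (∀ s ∈ S, ∀ y ∈ K s, h y = c s) ∧ ∀ y, |h y| ≤ B := by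
  classical
  have hφ : ∀ s ∈ S, ∃ φ : C(T, ℝ), EqOn φ 0 (⋃ t ∈ S.erase s, K t) ∧ EqOn φ 1 (K s) := by
    intro s hs
    obtain ⟨φ, hφ0, hφ1, -⟩ := exists_continuous_zero_one_of_isClosed
      (isClosed_biUnion_finset fun t ht => hK t (Finset.mem_of_mem_erase ht)) (hK s hs)
      (disjoint_iUnion₂_left.2 fun t ht =>
        hd (Finset.mem_of_mem_erase ht) hs (Finset.ne_of_mem_erase ht))
    exact ⟨φ, hφ0, hφ1⟩
  choose! φ hφ0 hφ1 using hφ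
  -- Clamping the sum of the bumps to `[-B, B]` keeps the prescribed values, which lie there.
  have hBB : -B ≤ B := by linarith
  let clamp : C(ℝ, ℝ) := ⟨fun v => projIcc (-B) B hBB v, by fun_prop⟩
  refine ⟨clamp.comp (∑ s ∈ S, c s • φ s), fun s hs y hy => ?_, fun y => ?_⟩
  · have hsum : (∑ t ∈ S, c t • φ t) y = c s := by
      rw [ContinuousMap.sum_apply, Finset.sum_eq_single_of_mem s hs]
      · simp [hφ1 s hs hy]
      · intro t ht hts
        simp [hφ0 t ht (mem_biUnion (Finset.mem_erase.2 ⟨hts.symm, hs⟩) hy)]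
    simp only [ContinuousMap.comp_apply, hsum]
    exact congrArg Subtype.val (projIcc_of_mem hBB (abs_le.1 (hc s hs)))
  · exact abs_le.2 (projIcc (-B) B hBB _).2

theorem AddMonoidHom.surjective_of_approx_preimage {E F : Type*} [NormedAddCommGroup E]
    [CompleteSpace E] [NormedAddCommGroup F] (T : E →+ F) (hT : Continuous T) {C θ : ℝ}
    (hC : 0 ≤ C) (hθ0 : 0 ≤ θ) (hθ1 : θ < 1)
    (happrox : ∀ f, ∃ g, ‖g‖ ≤ C * ‖f‖ ∧ ‖f - T g‖ ≤ θ * ‖f‖) :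
    Surjective T := by
  intro f
  choose approx happrox_norm happrox_sub using happrox
  -- `rest k` is what is still missing after `k` corrections; it shrinks geometrically.
  let rest : ℕ → F := fun k => (fun v => v - T (approx v))^[k] f
  have rest_succ (k : ℕ) : rest (k + 1) = rest k - T (approx (rest k)) :=
    iterate_succ_apply' _ _ _
  have norm_rest_le (k : ℕ) : ‖rest k‖ ≤ θ ^ k * ‖f‖ := by
    induction k with
    | zero => simp [rest]
    | succ k ih =>
      calc ‖rest (k + 1)‖ ≤ θ * ‖rest k‖ := rest_succ k ▸ happrox_sub _
        _ ≤ θ * (θ ^ k * ‖f‖) := by gcongr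
        _ = θ ^ (k + 1) * ‖f‖ := by ring
  have hsummable : Summable fun k => approx (rest k) :=
    .of_norm_bounded ((summable_geometric_of_lt_one hθ0 hθ1).mul_right (C * ‖f‖)) fun k =>
      calc ‖approx (rest k)‖ ≤ C * ‖rest k‖ := happrox_norm _
        _ ≤ C * (θ ^ k * ‖f‖) := by gcongr; exact norm_rest_le k
        _ = θ ^ k * (C * ‖f‖) := by ring
  have partial_sum (K : ℕ) : ∑ k ∈ Finset.range K, T (approx (rest k)) = f - rest K := by
    induction K with
    | zero => simp [rest]
    | succ K ih => rw [Finset.sum_range_succ, ih, rest_succ]; abel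
  have rest_tendsto : Tendsto rest atTop (𝓝 0) :=
    squeeze_zero_norm norm_rest_le <| by
      simpa using (tendsto_pow_atTop_nhds_zero_of_lt_one hθ0 hθ1).mul_const ‖f‖
  refine ⟨∑' k, approx (rest k),
    tendsto_nhds_unique (hsummable.hasSum.map T hT).tendsto_sum_nat ?_⟩
  simpa [partial_sum] using tendsto_const_nhds (x := f) |>.sub rest_tendsto

section InducedTransformation

variable {ι : Type*} [Fintype ι] {Y : ι → Type*} [∀ i, TopologicalSpace (Y i)]
  (X : Set (Π i, Y i))

@[simp]
lemma inducedL_apply (g : C((Σ i, Y i), ℝ)) (x : X) :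
    inducedL X g x = ∑ i, g ⟨i, (x : Π i, Y i) i⟩ :=
  rfl

noncomputable def inducedAddMonoidHom : C((Σ i, Y i), ℝ) →+ C(X, ℝ) where
  toFun := inducedL X
  map_zero' := by ext; simp
  map_add' g h := by ext; simp [Finset.sum_add_distrib]

@[simp]
lemma inducedL_zero : inducedL X 0 = 0 :=
  (inducedAddMonoidHom X).map_zero

variable [CompactSpace X] [∀ i, CompactSpace (Y i)]

lemma norm_inducedL_le (g : C((Σ i, Y i), ℝ)) :
    ‖inducedL X g‖ ≤ Fintype.card ι * ‖g‖ := by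
  refine (ContinuousMap.norm_le _ (by positivity)).2 fun x => ?_
  calc ‖inducedL X g x‖ ≤ ∑ i, ‖g ⟨i, (x : Π i, Y i) i⟩‖ := norm_sum_le _ _
    _ ≤ ∑ _i : ι, ‖g‖ := Finset.sum_le_sum fun i _ => g.norm_coe_le_norm _
    _ = Fintype.card ι * ‖g‖ := by simp

lemma continuous_inducedL : Continuous (inducedL X) :=
  AddMonoidHomClass.continuous_of_bound (inducedAddMonoidHom X) _ (norm_inducedL_le X)

end InducedTransformation

lemma abs_sub_sum_le_of_approx {ι : Type*} {s A : Finset ι} (hA : A ⊆ s) (a : ι → ℝ)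
    {u r ε ν : ℝ} (hν : 0 < ν) (hνA : ν ≤ A.card) (hε : 0 ≤ ε) (hu : |u| ≤ r)
    (hgood : ∀ i ∈ A, |a i - u / ν| ≤ ε) (hbound : ∀ i ∈ s, |a i| ≤ r / ν) :
    |u - ∑ i ∈ s, a i| ≤ (s.card - ν) * (r / ν) + s.card * ε := by
  classical
  have hsplit : u - ∑ i ∈ s, a i =
      (A.card - ν) * (-(u / ν)) - ∑ i ∈ A, (a i - u / ν) - ∑ i ∈ s \ A, a i := by
    rw [← Finset.sum_sdiff hA, Finset.sum_sub_distrib, Finset.sum_const, nsmul_eq_mul]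
    field_simp
    ring
  have hcard : ((s \ A).card : ℝ) = s.card - A.card := by
    rw [Finset.card_sdiff_of_subset hA, Nat.cast_sub (Finset.card_le_card hA)]
  have hscale : |(A.card - ν) * (-(u / ν))| ≤ (A.card - ν) * (r / ν) := by
    rw [abs_mul, abs_of_nonneg (sub_nonneg.2 hνA), abs_neg, abs_div, abs_of_pos hν]
    gcongr
  have hA_err : |∑ i ∈ A, (a i - u / ν)| ≤ A.card * ε := by
    simpa using (Finset.abs_sum_le_sum_abs _ _).trans (Finset.sum_le_card_nsmul _ _ _ hgood)
  have hrest : |∑ i ∈ s \ A, a i| ≤ (s \ A).card * (r / ν) := by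
    simpa using (Finset.abs_sum_le_sum_abs _ _).trans
      (Finset.sum_le_card_nsmul _ _ _ fun i hi => hbound i (Finset.sdiff_subset hi))
  have hAs : (A.card : ℝ) ≤ s.card := by exact_mod_cast Finset.card_le_card hA
  rw [hsplit]
  calc _ ≤ |(A.card - ν) * (-(u / ν))| + |∑ i ∈ A, (a i - u / ν)| + |∑ i ∈ s \ A, a i| :=
        (abs_sub _ _).trans (add_le_add_left (abs_sub _ _) _)
    _ ≤ (A.card - ν) * (r / ν) + A.card * ε + (s.card - A.card) * (r / ν) := by
        rw [← hcard]; gcongr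
    _ ≤ (s.card - ν) * (r / ν) + s.card * ε := by nlinarith

lemma KolSeparates.exists_sigma_eq {N : ℕ} {X : Set (Fin N → unitInterval)} [CompactSpace X]
    {Fm : Fin N → Finset (Set X)} (hsep : KolSeparates X Fm)
    (hclosed : ∀ i, ∀ s ∈ Fm i, IsClosed s) (c : Set X → ℝ) {B : ℝ} (hB : 0 ≤ B)
    (hc : ∀ i, ∀ s ∈ Fm i, |c s| ≤ B) :
    ∃ G : C((Σ _ : Fin N, unitInterval), ℝ), ‖G‖ ≤ B ∧
      ∀ i, ∀ s ∈ Fm i, ∀ x ∈ s, G ⟨i, (x : Fin N → unitInterval) i⟩ = c s := by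
  have hcoord (i : Fin N) : Continuous fun x : X => (x : Fin N → unitInterval) i :=
    (continuous_apply i).comp continuous_subtype_val
  have hslice (i : Fin N) : ∃ g : C(unitInterval, ℝ),
      (∀ s ∈ Fm i, ∀ y ∈ (fun x : X => (x : Fin N → unitInterval) i) '' s, g y = c s) ∧
        ∀ y, |g y| ≤ B :=
    exists_continuous_eq_const_of_pairwiseDisjoint
      (fun s hs => ((hclosed i s hs).isCompact.image (hcoord i)).isClosed)
      (fun s hs t ht hst => hsep i s hs t ht hst) c hB (hc i)
  choose g hg_eq hg_le using hslice
  refine ⟨⟨fun z => g z.1 z.2, continuous_sigma fun i => (g i).continuous⟩,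
    (ContinuousMap.norm_le _ hB).2 fun z => hg_le z.1 z.2,
    fun i s hs x hx => hg_eq i s hs _ (mem_image_of_mem _ hx)⟩

lemma exists_norm_sub_inducedL_le_of_separates {n : ℕ}
    {X : Set (Fin (2 * n + 1) → unitInterval)} [CompactSpace X]
    {Fm : Fin (2 * n + 1) → Finset (Set X)} (hsep : KolSeparates X Fm)
    (hclosed : ∀ i, ∀ s ∈ Fm i, IsClosed s)
    (hmult : ∀ x : X, n + 1 ≤ {i | ∃ s ∈ Fm i, x ∈ s}.ncard)
    (f : C(X, ℝ)) {η : ℝ} (hη : 0 ≤ η)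
    (hosc : ∀ i, ∀ s ∈ Fm i, ∀ x ∈ s, ∀ y ∈ s, |f x - f y| ≤ η) :
    ∃ g : C((Σ _ : Fin (2 * n + 1), unitInterval), ℝ), ‖g‖ ≤ ‖f‖ / (n + 1) ∧
      ‖f - inducedL X g‖ ≤ (n * ‖f‖ + (2 * n + 1) * η) / (n + 1) := by
  classical
  have hν : (0 : ℝ) < n + 1 := by positivity
  have hvalue (s : Set X) : ∃ c : ℝ, |c| ≤ ‖f‖ ∧ (s.Nonempty → ∃ y ∈ s, c = f y) := by
    rcases s.eq_empty_or_nonempty with rfl | ⟨y, hy⟩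
    · exact ⟨0, by simp, fun h => absurd h not_nonempty_empty⟩
    · exact ⟨f y, f.norm_coe_le_norm y, fun _ => ⟨y, hy, rfl⟩⟩
  choose c hc_le hc_eq using hvalue
  obtain ⟨G, hG_le, hG_eq⟩ := hsep.exists_sigma_eq hclosed (fun s => c s / (n + 1))
    (B := ‖f‖ / (n + 1)) (by positivity) fun i s _ => by
      rw [abs_div, abs_of_pos hν]; exact div_le_div_of_nonneg_right (hc_le s) hν.le
  refine ⟨G, hG_le, (ContinuousMap.norm_le _ (by positivity)).2 fun x => ?_⟩
  set A := {i | ∃ s ∈ Fm i, x ∈ s}.toFinset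
  have hA : (n + 1 : ℝ) ≤ A.card := by
    have := hmult x
    rw [Set.ncard_eq_toFinset_card'] at this
    exact_mod_cast this
  have hgood : ∀ i ∈ A, |G ⟨i, (x : _ → unitInterval) i⟩ - f x / (n + 1)| ≤ η / (n + 1) := by
    intro i hi
    obtain ⟨s, hs, hxs⟩ := Set.mem_toFinset.1 hi
    obtain ⟨y, hys, hcy⟩ := hc_eq s ⟨x, hxs⟩
    rw [hG_eq i s hs x hxs, hcy, ← sub_div, abs_div, abs_of_pos hν]
    exact div_le_div_of_nonneg_right (hosc i s hs y hys x hxs) hν.le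
  have hbound : ∀ i ∈ Finset.univ, |G ⟨i, (x : _ → unitInterval) i⟩| ≤ ‖f‖ / (n + 1) :=
    fun i _ => (G.norm_coe_le_norm _).trans hG_le
  calc ‖(f - inducedL X G) x‖
      = |f x - ∑ i, G ⟨i, (x : _ → unitInterval) i⟩| := rfl
    _ ≤ ((Finset.univ : Finset (Fin (2 * n + 1))).card - (n + 1)) * (‖f‖ / (n + 1)) +
          (Finset.univ : Finset (Fin (2 * n + 1))).card * (η / (n + 1)) :=
        abs_sub_sum_le_of_approx (Finset.subset_univ A) _ hν hA (by positivity)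
          (f.norm_coe_le_norm x) hgood hbound
    _ = (n * ‖f‖ + (2 * n + 1) * η) / (n + 1) := by
        simp only [Finset.card_univ, Fintype.card_fin]
        push_cast
        field_simp
        ring

lemma IsKolmogorovTypeEmbedding.exists_norm_sub_inducedL_le {n : ℕ}
    {X : Set (Fin (2 * n + 1) → unitInterval)} [CompactSpace X]
    {F : ℕ → Fin (2 * n + 1) → Finset (Set X)} (hemb : IsKolmogorovTypeEmbedding X F)
    (hF : IsKolmogorovFamily X n F) (f : C(X, ℝ)) :
    ∃ g : C((Σ _ : Fin (2 * n + 1), unitInterval), ℝ), ‖g‖ ≤ (n + 1 : ℝ)⁻¹ * ‖f‖ ∧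
      ‖f - inducedL X g‖ ≤ (n + 1 / 2) / (n + 1) * ‖f‖ := by
  obtain rfl | hf := eq_or_ne f 0
  · exact ⟨0, by simp, by simp⟩
  -- Oscillation `η` on the members of the cover costs `(2n+1) η` in total; take it `‖f‖ / 2`.
  set η := ‖f‖ / (2 * (2 * n + 1))
  have hη : 0 < η := by have := norm_pos_iff.2 hf; positivity
  obtain ⟨δ, hδ, hfδ⟩ := Metric.uniformContinuous_iff.1
    (CompactSpace.uniformContinuous_of_continuous f.continuous) η hη
  obtain ⟨m, hmesh, hsep⟩ := hemb δ hδ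
  have hosc : ∀ i, ∀ s ∈ F m i, ∀ x ∈ s, ∀ y ∈ s, |f x - f y| ≤ η := fun i s hs x hx y hy =>
    (hfδ ((dist_le_diam_of_mem isBounded_of_compactSpace hx hy).trans_lt (hmesh i s hs))).le
  obtain ⟨g, hg_le, hg_sub⟩ :=
    exists_norm_sub_inducedL_le_of_separates hsep (hF.1 m) (hF.2.1 m) f hη.le hosc
  refine ⟨g, hg_le.trans_eq (div_eq_inv_mul _ _), hg_sub.trans_eq ?_⟩
  simp only [η]
  field_simp

theorem statement7_general {n : ℕ}
    (X : Set (Fin (2 * n + 1) → unitInterval)) [CompactSpace X]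
    (F : ℕ → Fin (2 * n + 1) → Finset (Set X))
    (hF : IsKolmogorovFamily X n F)
    (hemb : IsKolmogorovTypeEmbedding X F) :
    Function.Surjective (inducedL X) :=
  (inducedAddMonoidHom X).surjective_of_approx_preimage (continuous_inducedL X) (by positivity)
    (by positivity) ((div_lt_one (by positivity)).2 (by linarith))
    (hemb.exists_norm_sub_inducedL_le hF)

/-- A Kolmogorov-type embedding `X ⊆ [0,1]^{2n+1}` is basic: the induced transformation
`L : C(Z, ℝ) → C(X, ℝ)` is surjective, i.e. every continuous `f : X → ℝ` is of the form
`f x = g y₁ + ⋯ + g y_{2n+1}` for some continuous `g : Z → ℝ`. -/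
theorem statement7 {n : ℕ} (hn : 1 ≤ n)
    (X : Set (Fin (2 * n + 1) → unitInterval)) [CompactSpace X]
    (F : ℕ → Fin (2 * n + 1) → Finset (Set X))
    (hF : IsKolmogorovFamily X n F)
    (hemb : IsKolmogorovTypeEmbedding X F) :
    Function.Surjective (inducedL X) :=
  statement7_general X F hF hemb
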